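/- arXiv:2308.12856 — 5 statements merged into one kernel-verified Lean document; each statement's English description precedes it below -/
import Mathlib

section
/- If ρ_t is convex, monotone, and translation invariant, and the uncertainty set satisfies u_{t+1}(λX + (1−λ)Y) ⊆ λ u_{t+1}(X) + (1−λ) u_{t+1}(Y) for all F_t-measurable λ with 0 ≤ λ ≤ 1, then the robust risk measure R_{t,T} is convex: R_{t,T}(λX + (1−λ)Y) ≤ λ R_{t,T}(X) + (1−λ) R_{t,T}(Y). -/
open Set Pointwise

/-- If `ρ` is convex, monotone, and translation invariant, and the
uncertainty set satisfies `u (λX + (1−λ)Y) ⊆ λ u X + (1−λ) u Y` for all `F_t`-measurable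
`0 ≤ λ ≤ 1`, then the robust risk measure `R X := esssup { ρ Z : Z ∈ u X }` is convex:
`R (λX + (1−λ)Y) ≤ λ R X + (1−λ) R Y`. -/
theorem convex_R {Ω : Type*} (m : MeasurableSpace Ω)
    (ρ : (Ω → ℝ) → (Ω → ℝ))
    (hmono : ∀ X Y : Ω → ℝ, X ≤ Y → ρ X ≤ ρ Y)
    (htrans : ∀ Y Z : Ω → ℝ, @Measurable Ω ℝ m _ Z → ρ (Y + Z) = ρ Y + Z)
    (hconv : ∀ lam : Ω → ℝ, @Measurable Ω ℝ m _ lam → 0 ≤ lam → lam ≤ 1 →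
      ∀ X Y : Ω → ℝ, ρ (lam * X + (1 - lam) * Y) ≤ lam * ρ X + (1 - lam) * ρ Y)
    (u : (ℕ → Ω → ℝ) → Set (Ω → ℝ))
    (hne : ∀ X, (u X).Nonempty)
    (hbdd : ∀ X, BddAbove (ρ '' u X))
    (hu : ∀ lam : Ω → ℝ, @Measurable Ω ℝ m _ lam → 0 ≤ lam → lam ≤ 1 →
      ∀ X Y : ℕ → Ω → ℝ,
        u (fun n => lam * X n + (1 - lam) * Y n) ⊆
          (fun g => lam * g) '' u X + (fun g => (1 - lam) * g) '' u Y) :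
    ∀ lam : Ω → ℝ, @Measurable Ω ℝ m _ lam → 0 ≤ lam → lam ≤ 1 →
      ∀ X Y : ℕ → Ω → ℝ,
        sSup (ρ '' u (fun n => lam * X n + (1 - lam) * Y n)) ≤
          lam * sSup (ρ '' u X) + (1 - lam) * sSup (ρ '' u Y) := by
  intro lam hlam h0 h1 X Y
  apply csSup_le ((hne _).image ρ)
  rintro b ⟨Z, hZ, rfl⟩
  obtain ⟨a, ⟨g, hg, rfl⟩, b', ⟨h, hh, rfl⟩, rfl⟩ :=
    Set.mem_add.mp (hu lam hlam h0 h1 X Y hZ)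
  calc ρ (lam * g + (1 - lam) * h) ≤ lam * ρ g + (1 - lam) * ρ h :=
        hconv lam hlam h0 h1 g h
    _ ≤ lam * sSup (ρ '' u X) + (1 - lam) * sSup (ρ '' u Y) := by
        intro ω
        have hg' : ρ g ≤ sSup (ρ '' u X) := le_csSup (hbdd X) ⟨g, hg, rfl⟩
        have hh' : ρ h ≤ sSup (ρ '' u Y) := le_csSup (hbdd Y) ⟨h, hh, rfl⟩
        have h1' : (0:Ω→ℝ) ≤ 1 - lam := fun ω' => by
          simpa [sub_nonneg] using h1 ω'
        exact add_le_add (mul_le_mul_of_nonneg_left (hg' ω) (h0 ω))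
          (mul_le_mul_of_nonneg_left (hh' ω) (h1' ω))
end

section
/- If ρ_t is sub-additive and for every Z ∈ u_{t+1}(X + Y) there exist X' ∈ u_{t+1}(X) and Y' ∈ u_{t+1}(Y) with Z ≤ X' + Y', and ρ_t is monotone, then the robust risk measure is sub-additive: R_{t,T}(X + Y) ≤ R_{t,T}(X) + R_{t,T}(Y). -/
open Set

/-- If `ρ` is monotone and sub-additive and for every `Z ∈ u (X + Y)` there
exist `X' ∈ u X` and `Y' ∈ u Y` with `Z ≤ X' + Y'`, then the robust risk measure
`R X := esssup { ρ Z : Z ∈ u X }` is sub-additive: `R (X + Y) ≤ R X + R Y`. -/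
theorem subadditive_R {Ω : Type*}
    (ρ : (Ω → ℝ) → (Ω → ℝ))
    (hmono : ∀ X Y : Ω → ℝ, X ≤ Y → ρ X ≤ ρ Y)
    (hsub : ∀ X Y : Ω → ℝ, ρ (X + Y) ≤ ρ X + ρ Y)
    (u : (ℕ → Ω → ℝ) → Set (Ω → ℝ))
    (hne : ∀ X, (u X).Nonempty)
    (hbdd : ∀ X, BddAbove (ρ '' u X))
    (hu : ∀ X Y : ℕ → Ω → ℝ, ∀ Z ∈ u (X + Y), ∃ X' ∈ u X, ∃ Y' ∈ u Y, Z ≤ X' + Y') :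
    ∀ X Y : ℕ → Ω → ℝ, sSup (ρ '' u (X + Y)) ≤ sSup (ρ '' u X) + sSup (ρ '' u Y) := by
  intro X Y
  apply csSup_le ((hne (X + Y)).image ρ)
  rintro _ ⟨Z, hZ, rfl⟩
  obtain ⟨X', hX', Y', hY', hle⟩ := hu X Y Z hZ
  calc ρ Z ≤ ρ (X' + Y') := hmono _ _ hle
    _ ≤ ρ X' + ρ Y' := hsub _ _
    _ ≤ sSup (ρ '' u X) + sSup (ρ '' u Y) :=
      add_le_add (le_csSup (hbdd X) ⟨X', hX', rfl⟩) (le_csSup (hbdd Y) ⟨Y', hY', rfl⟩)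
end

section
/- The robust risk measure R is monotone if and only if the consolidated uncertainty set U is monotone (X ≤ Y implies U_{t+1}(X) ⊆ U_{t+1}(Y)). -/
open Set

/-- A random variable is (essentially) bounded, i.e. lies in `L^∞`. -/
def IsBdd {Ω : Type*} (Y : Ω → ℝ) : Prop := ∃ C : ℝ, ∀ ω, |Y ω| ≤ C

/-- The robust risk measure `R X := esssup { ρ Z : Z ∈ u X }`. -/
noncomputable def robustR {Ω : Type*} (ρ : (Ω → ℝ) → (Ω → ℝ))
    (u : (ℕ → Ω → ℝ) → Set (Ω → ℝ)) (X : ℕ → Ω → ℝ) : Ω → ℝ :=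
  sSup (ρ '' u X)

/-- The consolidated uncertainty set `U X := { Z ∈ L^∞ : ρ Z ≤ R X }`. -/
def consolidated {Ω : Type*} (ρ : (Ω → ℝ) → (Ω → ℝ))
    (u : (ℕ → Ω → ℝ) → Set (Ω → ℝ)) (X : ℕ → Ω → ℝ) : Set (Ω → ℝ) :=
  {Z : Ω → ℝ | IsBdd Z ∧ ρ Z ≤ robustR ρ u X}

/-- The robust risk measure `R` is monotone if and only if the consolidated
uncertainty set `U` is monotone: `X ≤ Y` implies `U X ⊆ U Y`. -/
theorem monotone_R_iff_monotone_U {Ω : Type*}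
    (ρ : (Ω → ℝ) → (Ω → ℝ))
    (hmono : ∀ X Y : Ω → ℝ, X ≤ Y → ρ X ≤ ρ Y)
    (u : (ℕ → Ω → ℝ) → Set (Ω → ℝ))
    (hne : ∀ X, (u X).Nonempty)
    (hb : ∀ X, u X ⊆ {Y | IsBdd Y})
    (hub : ∀ X, ∃ c : ℝ, ∀ Y ∈ u X, Y ≤ fun _ => c) :
    (∀ X Y : ℕ → Ω → ℝ, X ≤ Y → robustR ρ u X ≤ robustR ρ u Y) ↔
      (∀ X Y : ℕ → Ω → ℝ, X ≤ Y → consolidated ρ u X ⊆ consolidated ρ u Y) := by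
  constructor
  · intro hR X Y hXY Z hZ
    exact ⟨hZ.1, hZ.2.trans (hR X Y hXY)⟩
  · intro hU X Y hXY
    obtain ⟨cX, hcX⟩ := hub X
    have hbdd : BddAbove (ρ '' u X) := ⟨ρ (fun _ => cX), by
      rintro _ ⟨Z, hZ, rfl⟩; exact hmono _ _ (hcX Z hZ)⟩
    apply csSup_le ((hne X).image ρ)
    rintro _ ⟨Z, hZ, rfl⟩
    have hmem : Z ∈ consolidated ρ u X := ⟨hb X hZ, le_csSup hbdd ⟨Z, hZ, rfl⟩⟩
    exact (hU X Y hXY hmem).2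
end

section
/- A dynamic robust risk measure R is weak recursive if and only if: for all X, Y with X_{t+1:s} + R_{s,T}(X_{s+1:T}) = Y_{t+1:s} + R_{s,T}(Y_{s+1:T}) for all s ∈ {t+1,…,T−1}, it holds that R_{t,T}(X_{t+1:T}) = R_{t,T}(Y_{t+1:T}). -/
open Set

/-- The process `X_{t':s} + W`: keep the components of `X` strictly before time `s`,
place `X s + W` in the time-`s` slot, and truncate (set to `0`) after time `s`. -/
def modifyAt {Ω : Type*} (X : ℕ → Ω → ℝ) (s : ℕ) (W : Ω → ℝ) : ℕ → Ω → ℝ :=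
  fun i => if i < s then X i else if i = s then X i + W else 0

/-- A dynamic (robust) risk measure `R` — a family of maps from processes
to `F_t`-measurable random variables, where `R t` only depends on the components
`X_{t+1:T}` — is weak recursive, i.e.
`R t X = R t (X_{t+1:s} + R s X − R s 0)` for all `s ∈ {t+1,…,T−1}`,
if and only if: for all `s ∈ {t+1,…,T−1}` and processes `X, Y` with
`X_{t+1:s} + R s X = Y_{t+1:s} + R s Y`, it holds that `R t X = R t Y`. -/
theorem weakRecursive_iff {Ω : Type*} (T : ℕ)
    (R : ℕ → (ℕ → Ω → ℝ) → (Ω → ℝ))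
    (hdep : ∀ t (X Y : ℕ → Ω → ℝ), (∀ i, t < i → X i = Y i) → R t X = R t Y) :
    (∀ t (X : ℕ → Ω → ℝ) (s : ℕ), t + 1 ≤ s → s + 1 ≤ T →
        R t X = R t (modifyAt X s (R s X - R s 0))) ↔
      (∀ t (s : ℕ), t + 1 ≤ s → s + 1 ≤ T → ∀ X Y : ℕ → Ω → ℝ,
        (∀ i, t + 1 ≤ i → i < s → X i = Y i) →
        X s + R s X = Y s + R s Y →
        R t X = R t Y) := by
  constructor
  · intro hrec t s hts hsT X Y hmid hs
    rw [hrec t X s hts hsT, hrec t Y s hts hsT]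
    apply hdep
    intro i hi
    simp only [modifyAt]
    rcases lt_trichotomy i s with h | h | h
    · simp only [if_pos h]
      exact hmid i hi h
    · subst h
      simp only [lt_irrefl, if_neg, if_pos rfl, if_false, ite_false, ite_true]
      rw [← add_sub_assoc, ← add_sub_assoc, hs]
    · simp [Nat.lt_asymm h, Nat.ne_of_gt h]
  · intro hcond t X s hts hsT
    apply hcond t s hts hsT
    · intro i hi his
      simp [modifyAt, his]
    · have hR : R s (modifyAt X s (R s X - R s 0)) = R s 0 := by
        apply hdep
        intro i hi
        simp [modifyAt, Nat.lt_asymm hi, Nat.ne_of_gt hi]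
      rw [hR]
      simp [modifyAt]
      abel
end

section
/- If the consolidated uncertainty set U is monotone and weak recursive, then it is order time-consistent. -/
open Set

/-- The robust risk measure `R t X := esssup { ρ t Y : Y ∈ u (t+1) X }`. -/
noncomputable def Rob {Ω : Type*} (ρ : ℕ → (Ω → ℝ) → (Ω → ℝ))
    (u : ℕ → (ℕ → Ω → ℝ) → Set (Ω → ℝ)) (t : ℕ) (X : ℕ → Ω → ℝ) : Ω → ℝ :=
  sSup (ρ t '' u (t + 1) X)

/-- The consolidated uncertainty set `U t X := { Y : ρ (t−1) Y ≤ R (t−1) X }`. -/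
def Cons {Ω : Type*} (ρ : ℕ → (Ω → ℝ) → (Ω → ℝ))
    (u : ℕ → (ℕ → Ω → ℝ) → Set (Ω → ℝ)) (t : ℕ) (X : ℕ → Ω → ℝ) : Set (Ω → ℝ) :=
  {Y : Ω → ℝ | ρ (t - 1) Y ≤ Rob ρ u (t - 1) X}

/-- If the consolidated uncertainty set `U` is monotone
(`X ≤ Y` implies `U t X ⊆ U t Y`) and weak recursive
(`U t X = U t (X_{t:s} + R s X − R s 0)` for all `s ∈ {t,…,T−1}`), then it is
order time-consistent: if `X_{t:s} = Y_{t:s}` and `U (s+1) X ⊆ U (s+1) Y` for some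
`s ∈ {t,…,T−1}`, then `U t X ⊆ U t Y`. -/
theorem monotone_weakRecursive_implies_orderTC {Ω : Type*} (T : ℕ)
    (ρ : ℕ → (Ω → ℝ) → (Ω → ℝ))
    (u : ℕ → (ℕ → Ω → ℝ) → Set (Ω → ℝ))
    (hnorm : ∀ t, ρ t 0 = 0)
    (hmono : ∀ t (X Y : Ω → ℝ), X ≤ Y → ρ t X ≤ ρ t Y)
    (hne : ∀ t X, (u t X).Nonempty)
    (hub : ∀ t X, ∃ c : ℝ, ∀ Y ∈ u t X, Y ≤ fun _ => c)
    (hdep : ∀ t (X Y : ℕ → Ω → ℝ), (∀ i, t < i → X i = Y i) → Rob ρ u t X = Rob ρ u t Y)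
    (hmonoU : ∀ t (X Y : ℕ → Ω → ℝ), 1 ≤ t → X ≤ Y → Cons ρ u t X ⊆ Cons ρ u t Y)
    (hwr : ∀ t (X : ℕ → Ω → ℝ) (s : ℕ), 1 ≤ t → t ≤ s → s + 1 ≤ T →
      Cons ρ u t X = Cons ρ u t (modifyAt X s (Rob ρ u s X - Rob ρ u s 0))) :
    ∀ t (s : ℕ) (X Y : ℕ → Ω → ℝ), 1 ≤ t → t ≤ s → s + 1 ≤ T →
      (∀ i, t ≤ i → i ≤ s → X i = Y i) →
      Cons ρ u (s + 1) X ⊆ Cons ρ u (s + 1) Y →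
      Cons ρ u t X ⊆ Cons ρ u t Y := by
  intro t s X Y ht hts hsT hagree hsub
  -- Rob s X ≤ Rob s Y
  have hRob : Rob ρ u s X ≤ Rob ρ u s Y := by
    have hbddY : BddAbove (ρ s '' u (s + 1) Y) := by
      obtain ⟨c, hc⟩ := hub (s + 1) Y
      exact ⟨ρ s (fun _ => c), by
        rintro _ ⟨Z, hZ, rfl⟩
        exact hmono s Z _ (hc Z hZ)⟩
    have hbddX : BddAbove (ρ s '' u (s + 1) X) := by
      obtain ⟨c, hc⟩ := hub (s + 1) X
      exact ⟨ρ s (fun _ => c), by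
        rintro _ ⟨Z, hZ, rfl⟩
        exact hmono s Z _ (hc Z hZ)⟩
    refine csSup_le (((hne (s + 1) X).image _)) ?_
    rintro _ ⟨Z, hZ, rfl⟩
    have hZX : Z ∈ Cons ρ u (s + 1) X := by
      simp only [Cons, Nat.add_sub_cancel, Set.mem_setOf_eq]
      exact le_csSup hbddX ⟨Z, hZ, rfl⟩
    have hZY := hsub hZX
    simp only [Cons, Nat.add_sub_cancel, Set.mem_setOf_eq] at hZY
    exact hZY
  -- Replace X's components below t by Y's.
  obtain ⟨X', hX'⟩ : ∃ X' : ℕ → Ω → ℝ, X' = fun i => if i < t then Y i else X i := ⟨_, rfl⟩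
  have hX'high : ∀ i, t - 1 < i → X i = X' i := by
    intro i hi
    have : ¬ i < t := by omega
    simp [hX', this]
  have hConsX : Cons ρ u t X = Cons ρ u t X' := by
    unfold Cons
    rw [hdep (t - 1) X X' hX'high]
  have hRobX' : Rob ρ u s X' = Rob ρ u s X := by
    refine hdep s X' X ?_
    intro i hi
    have : ¬ i < t := by omega
    simp [hX', this]
  -- weak recursion on X' and Y
  have hwrX := hwr t X' s ht hts hsT
  have hwrY := hwr t Y s ht hts hsT
  have hle : modifyAt X' s (Rob ρ u s X' - Rob ρ u s 0)
      ≤ modifyAt Y s (Rob ρ u s Y - Rob ρ u s 0) := by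
    intro i
    unfold modifyAt
    by_cases h1 : i < s
    · simp only [h1, if_true]
      by_cases h2 : i < t
      · simp [hX', h2, le_refl]
      · have : X' i = Y i := by
          simp [hX', h2]
          exact hagree i (by omega) (by omega)
        rw [this]
    · by_cases h2 : i = s
      · subst h2
        simp only [h1, if_false, if_true, hRobX']
        have hXY : X' i = Y i := by
          by_cases h3 : i < t
          · simp [hX', h3]
          · simp only [hX', h3, if_false]
            exact hagree i (by omega) le_rfl
        rw [hXY]
        intro ω
        simp only [Pi.add_apply, Pi.sub_apply]
        have := hRob ω
        linarith
      · simp [h1, h2, le_refl]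
  calc Cons ρ u t X = Cons ρ u t X' := hConsX
    _ = Cons ρ u t (modifyAt X' s (Rob ρ u s X' - Rob ρ u s 0)) := hwrX
    _ ⊆ Cons ρ u t (modifyAt Y s (Rob ρ u s Y - Rob ρ u s 0)) := hmonoU t _ _ ht hle
    _ = Cons ρ u t Y := hwrY.symm
end
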